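/- Let n be a positive integer and α a positive integer with α ≤ n. Then [n+α-1 choose α-1]_q ≡ [n-1 choose n-α]_q · (-1)^{α-1} q^{binom(α,2)} · (1 + (1-q^n)·∑_{i=1}^{α-1} (1+q^i)/(1-q^i)) (mod Φ_n(q)^2). -/

import Mathlib

open Finset Polynomial

noncomputable section

/-- The image of a polynomial in the field of rational functions. -/
def toRF (f : Polynomial ℚ) : RatFunc ℚ := algebraMap (Polynomial ℚ) (RatFunc ℚ) f

/-- The `q`-Pochhammer `(q;q)_m = ∏_{i=1}^m (1 - q^i)` as a rational function in `q`. -/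
def qfac (m : ℕ) : RatFunc ℚ := ∏ i ∈ Finset.range m, (1 - RatFunc.X ^ (i + 1))

/-- Gaussian binomial coefficient `[m choose j]_q = (q;q)_m / ((q;q)_j (q;q)_{m-j})`. -/
def qbinom (m j : ℕ) : RatFunc ℚ := qfac m / (qfac j * qfac (m - j))

/-- The `q`-integer `[m]_q = 1 + q + ⋯ + q^{m-1}`. -/
def qint (m : ℕ) : RatFunc ℚ := ∑ i ∈ Finset.range m, RatFunc.X ^ i

/-- The `q`-Fermat quotient `Q_n(2,q) = ((q^2;q^2)_{n-1}/(q;q)_{n-1} - 1)/[n]_q`. -/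
def qFermat (n : ℕ) : RatFunc ℚ :=
  ((∏ i ∈ Finset.range (n - 1), (1 - RatFunc.X ^ (2 * (i + 1)))) /
      (∏ i ∈ Finset.range (n - 1), (1 - RatFunc.X ^ (i + 1))) - 1) / qint n

/-- Congruence of rational functions modulo `Φ_n(q)^e`: the difference can be written as
`Φ_n(q)^e · f / g` with `g` not divisible by `Φ_n(q)`. -/
def phiCong (n e : ℕ) (A B : RatFunc ℚ) : Prop :=
  ∃ f g : Polynomial ℚ, ¬ (Polynomial.cyclotomic n ℚ ∣ g) ∧
    (A - B) * toRF g = toRF ((Polynomial.cyclotomic n ℚ) ^ e * f)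

namespace Stmt8Aux

lemma toRF_mul (p q : ℚ[X]) : toRF (p * q) = toRF p * toRF q := map_mul _ _ _
lemma toRF_add (p q : ℚ[X]) : toRF (p + q) = toRF p + toRF q := map_add _ _ _
lemma toRF_one : toRF 1 = 1 := map_one _
lemma toRF_X : toRF Polynomial.X = RatFunc.X := RatFunc.algebraMap_X
lemma toRF_neg (p : ℚ[X]) : toRF (-p) = -toRF p := map_neg _ _
lemma toRF_pow (p : ℚ[X]) (k : ℕ) : toRF (p ^ k) = toRF p ^ k := map_pow _ _ _
lemma toRF_zero : toRF 0 = 0 := map_zero _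

lemma one_sub_X_pow_poly_ne (k : ℕ) (hk : 0 < k) : (1 - Polynomial.X ^ k : ℚ[X]) ≠ 0 := by
  intro h
  have h2 := congrArg (Polynomial.eval 2) h
  simp at h2
  have : (1:ℚ) < 2 ^ k := one_lt_pow₀ (by norm_num) (by omega)
  linarith

lemma toRF_ne (p : ℚ[X]) (hp : p ≠ 0) : toRF p ≠ 0 := by
  simpa [toRF] using (RatFunc.algebraMap_ne_zero hp)

lemma one_sub_X_pow_eq (k : ℕ) :
    (1 - RatFunc.X ^ k : RatFunc ℚ) = toRF (1 - Polynomial.X ^ k) := by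
  simp [toRF, map_sub, map_pow, RatFunc.algebraMap_X]

lemma one_sub_X_pow_ne (k : ℕ) (hk : 0 < k) : (1 - RatFunc.X ^ k : RatFunc ℚ) ≠ 0 := by
  rw [one_sub_X_pow_eq]
  exact toRF_ne _ (one_sub_X_pow_poly_ne k hk)

lemma phi_prime {n : ℕ} (hn : 0 < n) : Prime (cyclotomic n ℚ) :=
  (cyclotomic.irreducible_rat hn).prime

lemma phi_not_dvd_one {n : ℕ} (hn : 0 < n) : ¬ (cyclotomic n ℚ ∣ 1) := by
  intro h
  exact (phi_prime hn).not_unit (isUnit_of_dvd_one h)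

lemma phi_not_dvd {n : ℕ} (hn : 0 < n) (k : ℕ) (hk : 0 < k) (hkn : k < n) :
    ¬ (cyclotomic n ℚ ∣ (1 - Polynomial.X ^ k)) := by
  intro h
  have hmap : (cyclotomic n ℂ) ∣ (1 - Polynomial.X ^ k : ℂ[X]) := by
    have := Polynomial.map_dvd (algebraMap ℚ ℂ) h
    simpa [Polynomial.map_cyclotomic] using this
  set ζ : ℂ := Complex.exp (2 * Real.pi * Complex.I / n)
  have hζ : IsPrimitiveRoot ζ n := Complex.isPrimitiveRoot_exp n hn.ne'
  have hroot : IsRoot (cyclotomic n ℂ) ζ := hζ.isRoot_cyclotomic hn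
  obtain ⟨c, hc⟩ := hmap
  have hzero : (1 : ℂ) - ζ ^ k = 0 := by
    have := congrArg (Polynomial.eval ζ) hc
    simp [hroot.eq_zero] at this
    simpa using this
  have hone : ζ ^ k = 1 := by linear_combination -hzero
  have hdvd := hζ.pow_eq_one_iff_dvd k |>.mp hone
  have := Nat.le_of_dvd hk hdvd
  omega

/-- polynomial version of the q-Pochhammer. -/
def Qf (m : ℕ) : ℚ[X] := ∏ i ∈ Finset.range m, (1 - Polynomial.X ^ (i + 1))

lemma qfac_eq (m : ℕ) : qfac m = toRF (Qf m) := by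
  simp [qfac, Qf, toRF, map_prod, map_sub, map_pow, RatFunc.algebraMap_X]

lemma Qf_ne (m : ℕ) : Qf m ≠ 0 := by
  apply Finset.prod_ne_zero_iff.mpr
  intro i _
  exact one_sub_X_pow_poly_ne _ (Nat.succ_pos i)

lemma qfac_ne (m : ℕ) : qfac m ≠ 0 := by
  rw [qfac_eq]; exact toRF_ne _ (Qf_ne m)

lemma phi_not_dvd_Qf {n : ℕ} (hn : 0 < n) (m : ℕ) (hm : m < n) :
    ¬ (cyclotomic n ℚ ∣ Qf m) := by
  induction m with
  | zero => simpa [Qf] using phi_not_dvd_one hn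
  | succ k ih =>
    rw [Qf, Finset.prod_range_succ, ← Qf]
    intro h
    rcases (phi_prime hn).dvd_mul.mp h with h1 | h2
    · exact ih (by omega) h1
    · exact phi_not_dvd hn (k+1) (by omega) (by omega) h2

/-- Regular elements: denominator coprime to `Φ_n`. -/
def Reg (n : ℕ) (A : RatFunc ℚ) : Prop :=
  ∃ p g : ℚ[X], ¬ (cyclotomic n ℚ ∣ g) ∧ A * toRF g = toRF p

lemma Reg.toRF' {n : ℕ} (hn : 0 < n) (p : ℚ[X]) : Reg n (toRF p) :=
  ⟨p, 1, phi_not_dvd_one hn, by simp [toRF_one]⟩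

lemma Reg.mul {n : ℕ} {A B : RatFunc ℚ} (hn : 0 < n) (hA : Reg n A) (hB : Reg n B) :
    Reg n (A * B) := by
  obtain ⟨p1, g1, hg1, h1⟩ := hA
  obtain ⟨p2, g2, hg2, h2⟩ := hB
  refine ⟨p1 * p2, g1 * g2, ?_, ?_⟩
  · intro h
    rcases (phi_prime hn).dvd_mul.mp h with h | h
    · exact hg1 h
    · exact hg2 h
  · rw [toRF_mul, toRF_mul]
    calc A * B * (toRF g1 * toRF g2) = (A * toRF g1) * (B * toRF g2) := by ring
    _ = toRF p1 * toRF p2 := by rw [h1, h2]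

lemma Reg.add {n : ℕ} {A B : RatFunc ℚ} (hn : 0 < n) (hA : Reg n A) (hB : Reg n B) :
    Reg n (A + B) := by
  obtain ⟨p1, g1, hg1, h1⟩ := hA
  obtain ⟨p2, g2, hg2, h2⟩ := hB
  refine ⟨p1 * g2 + p2 * g1, g1 * g2, ?_, ?_⟩
  · intro h
    rcases (phi_prime hn).dvd_mul.mp h with h | h
    · exact hg1 h
    · exact hg2 h
  · rw [toRF_add, toRF_mul, toRF_mul, toRF_mul]
    calc (A + B) * (toRF g1 * toRF g2)
        = (A * toRF g1) * toRF g2 + (B * toRF g2) * toRF g1 := by ring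
    _ = toRF p1 * toRF g2 + toRF p2 * toRF g1 := by rw [h1, h2]

lemma Reg.div {n : ℕ} (hn : 0 < n) (p g : ℚ[X]) (hg : ¬ (cyclotomic n ℚ ∣ g)) :
    Reg n (toRF p / toRF g) := by
  have hg0 : g ≠ 0 := by rintro rfl; exact hg (dvd_zero _)
  exact ⟨p, g, hg, div_mul_cancel₀ _ (toRF_ne _ hg0)⟩

lemma Reg.one {n : ℕ} (hn : 0 < n) : Reg n 1 := by
  have := Reg.toRF' hn 1
  rwa [toRF_one] at this

lemma Reg.neg_one {n : ℕ} (hn : 0 < n) : Reg n (-1) := by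
  have := Reg.toRF' hn (-1)
  rwa [toRF_neg, toRF_one] at this

lemma Reg.X_pow {n : ℕ} (hn : 0 < n) (k : ℕ) : Reg n (RatFunc.X ^ k) := by
  have := Reg.toRF' hn (Polynomial.X ^ k)
  rwa [toRF_pow, toRF_X] at this

lemma Reg.pow {n : ℕ} (hn : 0 < n) {A : RatFunc ℚ} (hA : Reg n A) (k : ℕ) :
    Reg n (A ^ k) := by
  induction k with
  | zero => simpa using Reg.one hn
  | succ m ih => rw [pow_succ]; exact Reg.mul hn ih hA

lemma Reg.sub {n : ℕ} {A B : RatFunc ℚ} (hn : 0 < n) (hA : Reg n A) (hB : Reg n B) :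
    Reg n (A - B) := by
  have : A - B = A + (-1) * B := by ring
  rw [this]
  exact Reg.add hn hA (Reg.mul hn (Reg.neg_one hn) hB)

lemma Reg.sum {n : ℕ} (hn : 0 < n) {ι : Type*} (s : Finset ι) (f : ι → RatFunc ℚ)
    (h : ∀ i ∈ s, Reg n (f i)) : Reg n (∑ i ∈ s, f i) := by
  classical
  induction s using Finset.induction_on with
  | empty =>
    refine ⟨0, 1, phi_not_dvd_one hn, ?_⟩
    simp [toRF_one, toRF_zero]
  | insert _ _ hx ih =>
    rw [Finset.sum_insert hx]
    exact Reg.add hn (h _ (Finset.mem_insert_self _ _))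
      (ih fun i hi => h i (Finset.mem_insert_of_mem hi))

lemma phiCong_of {n : ℕ} (hn : 0 < n) (A B C : RatFunc ℚ) (hC : Reg n C)
    (h : A - B = (1 - RatFunc.X ^ n) ^ 2 * C) : phiCong n 2 A B := by
  obtain ⟨p, g, hg, hCg⟩ := hC
  obtain ⟨u, hu⟩ := cyclotomic.dvd_X_pow_sub_one n ℚ
  refine ⟨u ^ 2 * p, g, hg, ?_⟩
  have h1 : (1 - RatFunc.X ^ n : RatFunc ℚ) = toRF (cyclotomic n ℚ * (-u)) := by
    rw [one_sub_X_pow_eq]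
    congr 1
    have : (1 : ℚ[X]) - Polynomial.X ^ n = -(Polynomial.X ^ n - 1) := by ring
    rw [this, hu]; ring
  calc (A - B) * toRF g = (1 - RatFunc.X ^ n) ^ 2 * (C * toRF g) := by rw [h]; ring
    _ = toRF (cyclotomic n ℚ * (-u)) ^ 2 * toRF p := by rw [h1, hCg]
    _ = toRF ((cyclotomic n ℚ * (-u)) ^ 2 * p) := by
          simp only [toRF_mul, toRF_pow, toRF_neg]
    _ = toRF (cyclotomic n ℚ ^ 2 * (u ^ 2 * p)) := by congr 1; ring

lemma phiCong_of_eq {n : ℕ} (hn : 0 < n) (A B : RatFunc ℚ) (h : A = B) :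
    phiCong n 2 A B :=
  ⟨0, 1, phi_not_dvd_one hn, by simp [h, toRF]⟩

lemma phiCong_trans {n : ℕ} (hn : 0 < n) {A B C : RatFunc ℚ}
    (h1 : phiCong n 2 A B) (h2 : phiCong n 2 B C) : phiCong n 2 A C := by
  obtain ⟨f1, g1, hg1, e1⟩ := h1
  obtain ⟨f2, g2, hg2, e2⟩ := h2
  refine ⟨f1 * g2 + f2 * g1, g1 * g2, ?_, ?_⟩
  · intro h
    rcases (phi_prime hn).dvd_mul.mp h with h | h
    · exact hg1 h
    · exact hg2 h
  · rw [toRF_mul]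
    calc (A - C) * (toRF g1 * toRF g2)
        = ((A - B) * toRF g1) * toRF g2 + ((B - C) * toRF g2) * toRF g1 := by ring
      _ = toRF (cyclotomic n ℚ ^ 2 * f1) * toRF g2
          + toRF (cyclotomic n ℚ ^ 2 * f2) * toRF g1 := by rw [e1, e2]
      _ = toRF (cyclotomic n ℚ ^ 2 * (f1 * g2 + f2 * g1)) := by
          rw [← toRF_mul, ← toRF_mul, ← toRF_add]; congr 1; ring

lemma phiCong_mul_right {n : ℕ} (hn : 0 < n) {A B : RatFunc ℚ} (C : RatFunc ℚ)
    (hC : Reg n C) (h : phiCong n 2 A B) : phiCong n 2 (A * C) (B * C) := by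
  obtain ⟨f, g, hg, e⟩ := h
  obtain ⟨p, g', hg', e'⟩ := hC
  refine ⟨f * p, g * g', ?_, ?_⟩
  · intro h
    rcases (phi_prime hn).dvd_mul.mp h with h | h
    · exact hg h
    · exact hg' h
  · rw [toRF_mul]
    calc (A * C - B * C) * (toRF g * toRF g')
        = ((A - B) * toRF g) * (C * toRF g') := by ring
      _ = toRF (cyclotomic n ℚ ^ 2 * f) * toRF p := by rw [e, e']
      _ = toRF (cyclotomic n ℚ ^ 2 * (f * p)) := by rw [← toRF_mul]; congr 1; ring

lemma qfac_succ (m : ℕ) : qfac (m + 1) = qfac m * (1 - RatFunc.X ^ (m + 1)) := by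
  rw [qfac, Finset.prod_range_succ, ← qfac]

lemma qfac_zero : qfac 0 = 1 := by simp [qfac]

lemma qbinom_zero (m : ℕ) : qbinom m 0 = 1 := by
  rw [qbinom, qfac_zero]
  simp [div_self (qfac_ne m)]

lemma qbinom_self (m : ℕ) : qbinom m m = 1 := by
  rw [qbinom, Nat.sub_self, qfac_zero]
  simp [div_self (qfac_ne m)]

lemma Reg.divRF {n : ℕ} (hn : 0 < n) {A : RatFunc ℚ} (hA : Reg n A) (g : ℚ[X])
    (hg : ¬ (cyclotomic n ℚ ∣ g)) : Reg n (A / toRF g) := by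
  obtain ⟨p, g', hg', h⟩ := hA
  refine ⟨p, g * g', ?_, ?_⟩
  · intro hd
    rcases (phi_prime hn).dvd_mul.mp hd with hd | hd
    · exact hg hd
    · exact hg' hd
  · have hg0 : toRF g ≠ 0 := toRF_ne _ (by rintro rfl; exact hg (dvd_zero _))
    rw [toRF_mul]
    calc (A / toRF g) * (toRF g * toRF g')
        = A * toRF g' * (toRF g / toRF g) := by ring
      _ = toRF p := by rw [div_self hg0, mul_one, h]

lemma qbinom_step_top (n a : ℕ) :
    qbinom (n + a + 1) (a + 1)
      = qbinom (n + a) a * ((1 - RatFunc.X ^ (n + a + 1)) / (1 - RatFunc.X ^ (a + 1))) := by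
  rw [qbinom, qbinom]
  have h1 : n + a + 1 - (a + 1) = n := by omega
  have h2 : n + a - a = n := by omega
  rw [h1, h2, qfac_succ (n + a), qfac_succ a]
  have e1 := qfac_ne (n + a)
  have e2 := qfac_ne a
  have e3 := qfac_ne n
  have e4 := one_sub_X_pow_ne (a + 1) (by omega)
  rw [div_mul_div_comm, div_eq_div_iff (by exact mul_ne_zero (mul_ne_zero e2 (by simpa using e4)) e3) (mul_ne_zero (mul_ne_zero e2 e3) (by simpa using e4))]
  ring

lemma qbinom_step_bot (a c : ℕ) :
    qbinom (a + c + 1) c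
      = qbinom (a + c + 1) (c + 1) * ((1 - RatFunc.X ^ (c + 1)) / (1 - RatFunc.X ^ (a + 1))) := by
  rw [qbinom, qbinom]
  have h1 : a + c + 1 - c = a + 1 := by omega
  have h2 : a + c + 1 - (c + 1) = a := by omega
  rw [h1, h2, qfac_succ c, qfac_succ a]
  have e1 := qfac_ne (a + c + 1)
  have e2 := qfac_ne a
  have e3 := qfac_ne c
  have e4 := one_sub_X_pow_ne (a + 1) (by omega)
  have e5 := one_sub_X_pow_ne (c + 1) (by omega)
  field_simp

lemma reg_qbinom {n : ℕ} (hn : 0 < n) (m j : ℕ) (hm : j < n) (hmj : m - j < n) :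
    Reg n (qbinom m j) := by
  rw [qbinom, qfac_eq, qfac_eq, qfac_eq, ← toRF_mul]
  refine Reg.divRF hn (Reg.toRF' hn _) _ ?_
  intro h
  rcases (phi_prime hn).dvd_mul.mp h with h | h
  · exact phi_not_dvd_Qf hn _ hm h
  · exact phi_not_dvd_Qf hn _ hmj h

lemma reg_sum {n : ℕ} (hn : 0 < n) (a : ℕ) (ha : a < n) :
    Reg n (∑ i ∈ Finset.Icc 1 a, (1 + RatFunc.X ^ i) / (1 - RatFunc.X ^ i)) := by
  apply Reg.sum hn
  intro i hi
  simp only [Finset.mem_Icc] at hi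
  have heq : (1 + RatFunc.X ^ i) / (1 - RatFunc.X ^ i)
      = toRF (1 + Polynomial.X ^ i) / toRF (1 - Polynomial.X ^ i) := by
    simp [toRF, map_add, map_sub, map_pow, map_one, RatFunc.algebraMap_X]
  rw [heq]
  exact Reg.div hn _ _ (phi_not_dvd hn i (by omega) (by omega))

end Stmt8Aux

open Stmt8Aux

theorem stmt_8' (n : ℕ) (hn : 0 < n) : ∀ α, 1 ≤ α → α ≤ n →
    phiCong n 2 (qbinom (n + α - 1) (α - 1))
      (qbinom (n - 1) (n - α) * (-1 : RatFunc ℚ) ^ (α - 1) * RatFunc.X ^ (α.choose 2)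
        * (1 + (1 - RatFunc.X ^ n)
            * ∑ i ∈ Finset.Icc 1 (α - 1), (1 + RatFunc.X ^ i) / (1 - RatFunc.X ^ i))) := by
  intro α hα
  induction α, hα using Nat.le_induction with
  | base =>
    intro _
    apply phiCong_of_eq hn
    have e1 : n + 1 - 1 = n := by omega
    have e2 : 1 - 1 = 0 := rfl
    rw [e1, e2, qbinom_zero]
    have e3 : Nat.choose 1 2 = 0 := rfl
    have e4 : Finset.Icc 1 0 = (∅ : Finset ℕ) := Finset.Icc_eq_empty (by omega)
    rw [qbinom_self, e3, e4]
    simp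
  | succ α hα1 ih =>
    intro hα1n
    obtain ⟨a, rfl⟩ : ∃ a, α = a + 1 := ⟨α - 1, by omega⟩
    -- abbreviation c for n - a - 2
    set c : ℕ := n - a - 2 with hcdef
    have hc : n - 1 = a + c + 1 := by omega
    have hc2 : n - (a + 1 + 1) = c := by omega
    have hc3 : n - (a + 1) = c + 1 := by omega
    have ihc := ih (by omega)
    have e1 : n + (a + 1) - 1 = n + a := by omega
    have e2 : a + 1 - 1 = a := by omega
    rw [e1, e2] at ihc
    have e3 : n + (a + 1 + 1) - 1 = n + a + 1 := by omega
    have e4 : a + 1 + 1 - 1 = a + 1 := by omega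
    rw [e3, e4, hc2]
    -- the ratio r
    have hAr := qbinom_step_top n a
    rw [hAr]
    have hreg_r : Reg n ((1 - RatFunc.X ^ (n + a + 1)) / (1 - RatFunc.X ^ (a + 1))) := by
      rw [one_sub_X_pow_eq (n + a + 1), one_sub_X_pow_eq (a + 1)]
      exact Reg.div hn _ _ (phi_not_dvd hn (a + 1) (by omega) (by omega))
    refine phiCong_trans hn
      (phiCong_mul_right hn _ hreg_r (ihc : phiCong n 2 (qbinom (n + a) a) _)) ?_
    -- second congruence: exact identity divisible by (1 - X^n)^2
    set S : RatFunc ℚ := ∑ i ∈ Finset.Icc 1 a, (1 + RatFunc.X ^ i) / (1 - RatFunc.X ^ i)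
      with hSdef
    refine phiCong_of hn _ _
      (qbinom (n - 1) (c + 1) * (-1 : RatFunc ℚ) ^ a * RatFunc.X ^ ((a + 1).choose 2)
        * ((1 + RatFunc.X ^ (a + 1)) * (S * (1 - RatFunc.X ^ (a + 1)) + 1)
            / toRF ((1 - Polynomial.X ^ (a + 1)) ^ 2))) ?_ ?_
    · -- regularity
      refine Reg.mul hn (Reg.mul hn (Reg.mul hn ?_ ?_) ?_) ?_
      · exact reg_qbinom hn (n - 1) (c + 1) (by omega) (by omega)
      · exact Reg.pow hn (Reg.neg_one hn) a
      · exact Reg.X_pow hn _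
      · refine Reg.divRF hn ?_ _ ?_
        · refine Reg.mul hn ?_ ?_
          · have : (1 + RatFunc.X ^ (a + 1) : RatFunc ℚ) = toRF (1 + Polynomial.X ^ (a + 1)) := by
              simp [toRF, map_add, map_pow, map_one, RatFunc.algebraMap_X]
            rw [this]; exact Reg.toRF' hn _
          · refine Reg.add hn (Reg.mul hn ?_ ?_) (Reg.one hn)
            · rw [hSdef]; exact reg_sum hn a (by omega)
            · rw [one_sub_X_pow_eq]; exact Reg.toRF' hn _
        · intro h
          rcases (phi_prime hn).dvd_mul.mp (by rwa [sq] at h) with h | h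
          · exact phi_not_dvd hn (a + 1) (by omega) (by omega) h
          · exact phi_not_dvd hn (a + 1) (by omega) (by omega) h
    · -- the exact identity
      -- rewrite RHS_{α+1} pieces
      have hQ : qbinom (n - 1) c
          = qbinom (n - 1) (c + 1) * ((1 - RatFunc.X ^ (c + 1)) / (1 - RatFunc.X ^ (a + 1))) := by
        rw [hc]; exact qbinom_step_bot a c
      have hS : (∑ i ∈ Finset.Icc 1 (a + 1), (1 + RatFunc.X ^ i) / (1 - RatFunc.X ^ i))
          = S + (1 + RatFunc.X ^ (a + 1)) / (1 - RatFunc.X ^ (a + 1)) := by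
        rw [hSdef]
        exact Finset.sum_Icc_succ_top (by omega) _
      have hK : (a + 1 + 1).choose 2 = (a + 1).choose 2 + (a + 1) := by
        simp [Nat.choose_succ_succ (a + 1) 1]
        omega
      rw [hc3, hQ, hS, hK]
      have hxK : (RatFunc.X : RatFunc ℚ) ^ ((a + 1).choose 2 + (a + 1))
          = RatFunc.X ^ ((a + 1).choose 2) * RatFunc.X ^ (a + 1) := pow_add _ _ _
      have he : ((-1 : RatFunc ℚ)) ^ (a + 1) = (-1 : RatFunc ℚ) ^ a * (-1) := pow_succ _ _
      rw [hxK, he]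
      have hxn : (RatFunc.X : RatFunc ℚ) ^ n = RatFunc.X ^ (c + 1) * RatFunc.X ^ (a + 1) := by
        rw [← pow_add]; congr 1; omega
      have hxna : (RatFunc.X : RatFunc ℚ) ^ (n + a + 1)
          = RatFunc.X ^ (c + 1) * RatFunc.X ^ (a + 1) * RatFunc.X ^ (a + 1) := by
        rw [← pow_add, ← pow_add]; congr 1; omega
      have htoRF : toRF ((1 - Polynomial.X ^ (a + 1)) ^ 2)
          = (1 - RatFunc.X ^ (a + 1)) ^ 2 := by
        rw [toRF_pow, ← one_sub_X_pow_eq]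
      rw [hxn, hxna, htoRF]
      have hd : (1 - RatFunc.X ^ (a + 1) : RatFunc ℚ) ≠ 0 :=
        one_sub_X_pow_ne (a + 1) (by omega)
      field_simp
      ring

theorem stmt_8 (n α : ℕ) (hn : 0 < n) (hα : 0 < α) (hαn : α ≤ n) :
    phiCong n 2 (qbinom (n + α - 1) (α - 1))
      (qbinom (n - 1) (n - α) * (-1 : RatFunc ℚ) ^ (α - 1) * RatFunc.X ^ (α.choose 2)
        * (1 + (1 - RatFunc.X ^ n)
            * ∑ i ∈ Finset.Icc 1 (α - 1), (1 + RatFunc.X ^ i) / (1 - RatFunc.X ^ i))) :=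
  stmt_8' n hn α hα hαn
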